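/- Let H ∈ ℝ^{n×n} be symmetric positive definite, g ∈ ℝⁿ, c ∈ ℝᵐ, M ∈ ℝ^{m×n}, r ∈ ℝᵐ, and Λ > 0. Suppose d* ∈ ℝⁿ satisfies c + Md* ≤ r (componentwise) together with the KKT conditions of the quadratic program min { gᵀd + (1/2)dᵀHd : c + Md ≤ r }: there exists λ ∈ ℝᵐ with λ ≥ 0, g + Hd* + Mᵀλ = 0, and λᵢ(c + Md* − r)ᵢ = 0 for all i; assume ‖λ‖_∞ ≤ Λ. Then d* is a global minimizer over ℝⁿ of the exact penalty function p(d) = gᵀd + (1/2)dᵀHd + mΛ·‖max{c + Md − r, 0}‖_∞. -/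

import Mathlib

noncomputable section

/-- `Vec n` is `ℝⁿ` with the Euclidean norm. -/
abbrev Vec (n : ℕ) := EuclideanSpace ℝ (Fin n)

/-- The dot product `gᵀd`. -/
def dotp {n : ℕ} (g d : Vec n) : ℝ := ∑ i, g i * d i

/-- The quadratic form `dᵀHd`. -/
def quad {n : ℕ} (H : Matrix (Fin n) (Fin n) ℝ) (d : Vec n) : ℝ :=
  ∑ i, ∑ j, d i * H i j * d j

/-- Componentwise positive part `max{u, 0}`. -/
def posv {m : ℕ} (u : Fin m → ℝ) : Fin m → ℝ := fun i => max (u i) 0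

/-- The ℓ∞ norm `‖u‖_∞ = maxᵢ |uᵢ|`. -/
def normInf {m : ℕ} (u : Fin m → ℝ) : ℝ := ⨆ i, |u i|

lemma abs_le_normInf {m : ℕ} (u : Fin m → ℝ) (i : Fin m) : |u i| ≤ normInf u :=
  le_ciSup (f := fun i => |u i|) (Set.Finite.bddAbove (Set.finite_range _)) i

/-- A KKT point `d*` of the QP `min gᵀd + (1/2)dᵀHd  s.t. c + Md ≤ r`, whose
multiplier is bounded in the ℓ∞ norm by `Λ`, globally minimizes the exact penalty
function `p(d) = gᵀd + (1/2)dᵀHd + mΛ‖max{c + Md − r, 0}‖_∞`. -/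
theorem kkt_minimizes_exact_penalty
    {m n : ℕ} (H : Matrix (Fin n) (Fin n) ℝ) (hH : H.PosDef)
    (g : Vec n) (c : Fin m → ℝ) (M : Matrix (Fin m) (Fin n) ℝ) (r : Fin m → ℝ)
    (Λ : ℝ) (hΛ : 0 < Λ)
    (dstar : Vec n) (hfeas : ∀ i, c i + M.mulVec dstar i ≤ r i)
    (lam : Fin m → ℝ) (hlam : ∀ i, 0 ≤ lam i)
    (hstat : ∀ j, g j + H.mulVec dstar j + ∑ i, M i j * lam i = 0)
    (hcomp : ∀ i, lam i * (c i + M.mulVec dstar i - r i) = 0)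
    (hbound : normInf lam ≤ Λ) :
    ∀ d : Vec n,
      dotp g dstar + (1/2) * quad H dstar
          + (m : ℝ) * Λ * normInf (posv (c + M.mulVec dstar - r))
        ≤ dotp g d + (1/2) * quad H d
          + (m : ℝ) * Λ * normInf (posv (c + M.mulVec d - r)) := by
  intro d
  have hsym : ∀ i j, H i j = H j i := fun i j => by simpa using hH.1.apply j i
  -- the penalty term at dstar vanishes
  have hNstar : normInf (posv (c + M.mulVec dstar - r)) = 0 := by
    have h0 : ∀ i : Fin m, posv (c + M.mulVec dstar - r) i = 0 := by
      intro i
      have := hfeas i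
      simp only [posv, Pi.sub_apply, Pi.add_apply]
      exact max_eq_right (by linarith)
    have hle : normInf (posv (c + M.mulVec dstar - r)) ≤ 0 := by
      apply Real.iSup_le _ le_rfl
      intro i; rw [h0 i]; simp
    have hge : 0 ≤ normInf (posv (c + M.mulVec dstar - r)) :=
      Real.iSup_nonneg fun i => abs_nonneg _
    linarith
  set N := normInf (posv (c + M.mulVec d - r)) with hN
  have hNnn : 0 ≤ N := Real.iSup_nonneg fun i => abs_nonneg _
  -- componentwise bounds
  have hposvle : ∀ i, posv (c + M.mulVec d - r) i ≤ N := fun i =>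
    le_trans (le_abs_self _) (abs_le_normInf _ i)
  have hlamle : ∀ i, lam i ≤ Λ := fun i =>
    le_trans (le_abs_self _) (le_trans (abs_le_normInf _ i) hbound)
  -- bound the multiplier term
  have hsumbound : ∑ i, lam i * (c i + M.mulVec d i - r i) ≤ (m : ℝ) * Λ * N := by
    have : ∀ i ∈ Finset.univ, lam i * (c i + M.mulVec d i - r i) ≤ Λ * N := by
      intro i _
      have h1 : c i + M.mulVec d i - r i ≤ posv (c + M.mulVec d - r) i := by
        simp only [posv, Pi.sub_apply, Pi.add_apply]; exact le_max_left _ _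
      have h2 : lam i * (c i + M.mulVec d i - r i) ≤ lam i * posv (c + M.mulVec d - r) i :=
        mul_le_mul_of_nonneg_left h1 (hlam i)
      have h3 : lam i * posv (c + M.mulVec d - r) i ≤ Λ * N := by
        apply mul_le_mul (hlamle i) (hposvle i) _ hΛ.le
        simp only [posv, Pi.sub_apply, Pi.add_apply]; exact le_max_right _ _
      linarith
    calc ∑ i, lam i * (c i + M.mulVec d i - r i) ≤ ∑ _i : Fin m, Λ * N :=
          Finset.sum_le_sum this
      _ = (m : ℝ) * Λ * N := by simp [Finset.sum_const, mul_assoc]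
  -- swap lemma
  have hswap : ∑ i, ∑ j, dstar i * H i j * d j = ∑ i, ∑ j, d i * H i j * dstar j := by
    rw [Finset.sum_comm]
    refine Finset.sum_congr rfl fun i _ => Finset.sum_congr rfl fun j _ => ?_
    rw [hsym j i]; ring
  -- positivity of the quadratic form on the increment
  have hQ : 0 ≤ ∑ i, ∑ j, (d i - dstar i) * H i j * (d j - dstar j) := by
    have := hH.posSemidef.dotProduct_mulVec_nonneg (fun j => d j - dstar j)
    simpa [dotProduct, Matrix.mulVec, Finset.mul_sum, mul_assoc,
      mul_comm, mul_left_comm] using this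
  -- quadratic expansion
  have hexpand : ∑ i, ∑ j, (d i - dstar i) * H i j * (d j - dstar j)
      = quad H d - 2 * (∑ i, ∑ j, dstar i * H i j * d j) + quad H dstar := by
    have hterm : ∀ i j : Fin n, (d i - dstar i) * H i j * (d j - dstar j)
        = d i * H i j * d j - dstar i * H i j * d j
          - d i * H i j * dstar j + dstar i * H i j * dstar j := fun i j => by ring
    simp only [hterm, Finset.sum_add_distrib, Finset.sum_sub_distrib, quad]
    rw [← hswap]; ring
  -- the linear term via stationarity
  have hlin : ∑ j, H.mulVec dstar j * (d j - dstar j)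
      = ∑ i, ∑ j, dstar i * H i j * d j - quad H dstar := by
    have h1 : ∀ j, H.mulVec dstar j * (d j - dstar j)
        = ∑ i, (H j i * dstar i * d j - H j i * dstar i * dstar j) := by
      intro j
      simp only [Matrix.mulVec, dotProduct]
      rw [Finset.sum_mul]
      exact Finset.sum_congr rfl fun i _ => by ring
    simp only [h1, Finset.sum_sub_distrib, quad]
    congr 1
    · rw [Finset.sum_comm]
      exact Finset.sum_congr rfl fun i _ => Finset.sum_congr rfl fun j _ => by
        rw [hsym i j]; ring
    · rw [Finset.sum_comm]
      exact Finset.sum_congr rfl fun i _ => Finset.sum_congr rfl fun j _ => by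
        rw [hsym i j]; ring
  -- stationarity: rewrite the gradient term
  have hgrad : ∑ j, (g j + H.mulVec dstar j) * (d j - dstar j)
      = - ∑ i, lam i * (M.mulVec d i - M.mulVec dstar i) := by
    have h1 : ∀ j, g j + H.mulVec dstar j = - ∑ i, M i j * lam i := fun j => by
      have := hstat j; linarith
    have h2 : ∀ i, ∑ j, -(M i j * lam i * (d j - dstar j))
        = -(lam i * (M.mulVec d i - M.mulVec dstar i)) := by
      intro i
      simp only [Matrix.mulVec, dotProduct, mul_sub, Finset.mul_sum]
      rw [← Finset.sum_sub_distrib, ← Finset.sum_neg_distrib]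
      exact Finset.sum_congr rfl fun j _ => by ring
    calc ∑ j, (g j + H.mulVec dstar j) * (d j - dstar j)
        = ∑ j, ∑ i, -(M i j * lam i * (d j - dstar j)) := by
          refine Finset.sum_congr rfl fun j _ => ?_
          rw [h1 j, ← Finset.sum_neg_distrib, Finset.sum_mul]
          exact Finset.sum_congr rfl fun i _ => by ring
      _ = ∑ i, -(lam i * (M.mulVec d i - M.mulVec dstar i)) := by
          rw [Finset.sum_comm]
          exact Finset.sum_congr rfl fun i _ => h2 i
      _ = - ∑ i, lam i * (M.mulVec d i - M.mulVec dstar i) :=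
          Finset.sum_neg_distrib _
  -- complementarity
  have hcomp' : ∑ i, lam i * (M.mulVec d i - M.mulVec dstar i)
      = ∑ i, lam i * (c i + M.mulVec d i - r i) := by
    refine Finset.sum_congr rfl fun i _ => ?_
    linear_combination (-1 : ℝ) * hcomp i
  -- split the gradient term
  have hsplit : ∑ j, (g j + H.mulVec dstar j) * (d j - dstar j)
      = (dotp g d - dotp g dstar) + ∑ j, H.mulVec dstar j * (d j - dstar j) := by
    simp only [dotp, ← Finset.sum_sub_distrib, ← Finset.sum_add_distrib]
    exact Finset.sum_congr rfl fun j _ => by ring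
  rw [hNstar]
  linarith [hsumbound, hQ, hexpand, hlin, hgrad, hcomp', hsplit]
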